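/- arXiv:1411.1904 — 10 statements merged into one kernel-verified Lean document; each statement's English description precedes it below -/
import Mathlib

section
/- Let A : H₁ → H₂ be a bounded linear operator with ‖A‖ > 0 and let T : H₂ → H₂ be firmly nonexpansive. Then the Landweber-type operator V := Id + ‖A‖⁻² A*(T − Id)A is firmly nonexpansive. -/
open scoped RealInnerProductSpace

theorem stmt_6 {H₁ H₂ : Type*} [NormedAddCommGroup H₁] [InnerProductSpace ℝ H₁]
    [CompleteSpace H₁] [NormedAddCommGroup H₂] [InnerProductSpace ℝ H₂] [CompleteSpace H₂]
    (A : H₁ →L[ℝ] H₂) (hA : ‖A‖ > 0)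
    (T : H₂ → H₂)
    (hT : ∀ u v : H₂, ⟪T u - T v, u - v⟫ ≥ ‖T u - T v‖ ^ 2)
    (V : H₁ → H₁)
    (hV : ∀ x : H₁, V x = x + (‖A‖ ^ 2)⁻¹ • (ContinuousLinearMap.adjoint A) (T (A x) - A x)) :
    ∀ x y : H₁, ⟪V x - V y, x - y⟫ ≥ ‖V x - V y‖ ^ 2 := by
  intro x y
  set γ : ℝ := (‖A‖ ^ 2)⁻¹ with hγ
  have hγpos : 0 < γ := by positivity
  set u : H₁ := x - y with hu
  set s : H₂ := T (A x) - T (A y) with hs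
  set a : H₂ := A x - A y with ha
  set w : H₂ := s - a with hw
  set c : H₁ := (ContinuousLinearMap.adjoint A) w with hc
  have hVxy : V x - V y = u + γ • c := by
    have hd : (ContinuousLinearMap.adjoint A) (T (A x) - A x) -
        (ContinuousLinearMap.adjoint A) (T (A y) - A y) = c := by
      simp only [hc, hw, hs, ha, map_sub]
      abel
    rw [hV x, hV y, add_sub_add_comm, ← smul_sub, hd]
  have hAu : A u = a := by rw [hu, ha, map_sub]
  have hcu : ⟪c, u⟫ = ⟪w, a⟫ := by
    rw [hc, ContinuousLinearMap.adjoint_inner_left, hAu]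
  have hcu2 : ⟪u, c⟫ = ⟪w, a⟫ := by rw [← hcu, real_inner_comm]
  have h1 : ⟪s, a⟫ ≥ ‖s‖ ^ 2 := hT (A x) (A y)
  have hnormadj : ‖(ContinuousLinearMap.adjoint A : H₂ →L[ℝ] H₁)‖ = ‖A‖ :=
    (ContinuousLinearMap.adjoint : (H₁ →L[ℝ] H₂) ≃ₗᵢ⋆[ℝ] (H₂ →L[ℝ] H₁)).norm_map A
  have h2 : ‖c‖ ≤ ‖A‖ * ‖w‖ := by
    have := (ContinuousLinearMap.adjoint A).le_opNorm w
    rwa [hnormadj] at this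
  have h2' : ‖c‖ ^ 2 ≤ ‖A‖ ^ 2 * ‖w‖ ^ 2 := by
    rw [← mul_pow]
    exact pow_le_pow_left₀ (norm_nonneg _) h2 2
  have hwn : ‖w‖ ^ 2 = ‖s‖ ^ 2 - 2 * ⟪s, a⟫ + ‖a‖ ^ 2 := by
    rw [hw, @norm_sub_sq_real]
  have hwa : ⟪w, a⟫ = ⟪s, a⟫ - ‖a‖ ^ 2 := by
    rw [hw, inner_sub_left, real_inner_self_eq_norm_sq]
  have hγA : γ * ‖A‖ ^ 2 = 1 := by
    rw [hγ]; field_simp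
  -- expand both sides
  have hru : ⟪u, γ • c⟫ = γ * ⟪w, a⟫ := by
    rw [real_inner_smul_right, hcu2]
  have lhs : ⟪u + γ • c, u⟫ = ‖u‖ ^ 2 + γ * ⟪w, a⟫ := by
    rw [inner_add_left, real_inner_smul_left, hcu, real_inner_self_eq_norm_sq]
  have rhs : ‖u + γ • c‖ ^ 2 = ‖u‖ ^ 2 + 2 * (γ * ⟪w, a⟫) + γ ^ 2 * ‖c‖ ^ 2 := by
    rw [norm_add_sq_real, hru, norm_smul, Real.norm_eq_abs, abs_of_pos hγpos, mul_pow]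
  rw [hVxy, lhs, rhs]
  have hkey : γ ^ 2 * ‖c‖ ^ 2 ≤ γ * (-⟪w, a⟫) := by
    have e1 : γ ^ 2 * ‖c‖ ^ 2 ≤ γ ^ 2 * (‖A‖ ^ 2 * ‖w‖ ^ 2) := by
      apply mul_le_mul_of_nonneg_left h2' (by positivity)
    have e2 : γ ^ 2 * (‖A‖ ^ 2 * ‖w‖ ^ 2) = γ * ‖w‖ ^ 2 := by
      rw [pow_two]; rw [mul_assoc, ← mul_assoc γ (‖A‖^2) (‖w‖^2), hγA]; ring
    have e3 : γ * ‖w‖ ^ 2 ≤ γ * (-⟪w, a⟫) := by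
      apply mul_le_mul_of_nonneg_left _ hγpos.le
      rw [hwn, hwa]; linarith
    linarith
  nlinarith [hkey]
end

section
/- Let A : H₁ → H₂ be a bounded linear operator with ‖A‖ > 0 and let T : H₂ → H₂ be nonexpansive. Then the Landweber-type operator V := Id + ‖A‖⁻² A*(T − Id)A is nonexpansive. -/
open scoped RealInnerProductSpace

theorem stmt_7 {H₁ H₂ : Type*} [NormedAddCommGroup H₁] [InnerProductSpace ℝ H₁]
    [CompleteSpace H₁] [NormedAddCommGroup H₂] [InnerProductSpace ℝ H₂] [CompleteSpace H₂]
    (A : H₁ →L[ℝ] H₂) (hA : ‖A‖ > 0)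
    (T : H₂ → H₂)
    (hT : ∀ u v : H₂, ‖T u - T v‖ ≤ ‖u - v‖)
    (V : H₁ → H₁)
    (hV : ∀ x : H₁, V x = x + (‖A‖ ^ 2)⁻¹ • (ContinuousLinearMap.adjoint A) (T (A x) - A x)) :
    ∀ x y : H₁, ‖V x - V y‖ ≤ ‖x - y‖ := by
  intro x y
  set lam : ℝ := (‖A‖ ^ 2)⁻¹ with hlam
  set a : H₂ := A x - A y with ha
  set t : H₂ := T (A x) - T (A y) with ht
  set w : H₂ := t - a with hw
  have hdiff : V x - V y = (x - y) + lam • (ContinuousLinearMap.adjoint A) w := by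
    have hsplit : (ContinuousLinearMap.adjoint A) w =
        (ContinuousLinearMap.adjoint A) (T (A x) - A x) -
        (ContinuousLinearMap.adjoint A) (T (A y) - A y) := by
      rw [← map_sub]; congr 1; rw [hw, ht, ha]; abel
    rw [hV x, hV y, hsplit, smul_sub]
    abel
  have hAxy : A (x - y) = a := by rw [map_sub]
  have hkey : ‖V x - V y‖ ^ 2 ≤ ‖x - y‖ ^ 2 := by
    have h1 : ‖V x - V y‖ ^ 2 =
        ‖x - y‖ ^ 2 + 2 * (lam * ⟪a, w⟫) + lam ^ 2 * ‖(ContinuousLinearMap.adjoint A) w‖ ^ 2 := by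
      rw [hdiff, @norm_add_sq_real, real_inner_smul_right, norm_smul,
        ContinuousLinearMap.adjoint_inner_right, hAxy, Real.norm_eq_abs,
        abs_of_nonneg (by positivity : (0:ℝ) ≤ lam), mul_pow]
    have h2 : ‖(ContinuousLinearMap.adjoint A) w‖ ≤ ‖A‖ * ‖w‖ := by
      calc ‖(ContinuousLinearMap.adjoint A) w‖ ≤ ‖ContinuousLinearMap.adjoint A‖ * ‖w‖ :=
              (ContinuousLinearMap.adjoint A).le_opNorm w
        _ = ‖A‖ * ‖w‖ := by rw [ContinuousLinearMap.adjoint.norm_map A]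
    have h3 : ‖t‖ ≤ ‖a‖ := hT (A x) (A y)
    have h4 : 2 * ⟪a, w⟫ = ‖t‖ ^ 2 - ‖a‖ ^ 2 - ‖w‖ ^ 2 := by
      have e1 : ‖w‖ ^ 2 = ‖t‖ ^ 2 - 2 * ⟪t, a⟫ + ‖a‖ ^ 2 := norm_sub_sq_real t a
      have e2 : ⟪a, w⟫ = ⟪a, t⟫ - ⟪a, a⟫ := inner_sub_right a t a
      have e3 : ⟪a, a⟫ = ‖a‖ ^ 2 := real_inner_self_eq_norm_sq a
      have e4 : ⟪t, a⟫ = ⟪a, t⟫ := real_inner_comm a t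
      rw [e2, e3]; rw [e4] at e1; linarith
    have hlam1 : lam * ‖A‖ ^ 2 = 1 := by
      rw [hlam]; field_simp
    have hlampos : 0 < lam := by positivity
    have h2' : ‖(ContinuousLinearMap.adjoint A) w‖ ^ 2 ≤ ‖A‖ ^ 2 * ‖w‖ ^ 2 := by
      rw [← mul_pow]; exact pow_le_pow_left₀ (norm_nonneg _) h2 2
    rw [h1]
    nlinarith [sq_nonneg ‖w‖, norm_nonneg t, norm_nonneg a,
      mul_le_mul_of_nonneg_left h2' (le_of_lt (mul_pos hlampos hlampos)),
      mul_le_mul (le_refl lam) h2' (sq_nonneg _) hlampos.le,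
      mul_nonneg hlampos.le (sq_nonneg ‖w‖),
      mul_le_mul h3 h3 (norm_nonneg t) (norm_nonneg a)]
  have := Real.sqrt_le_sqrt hkey
  rwa [Real.sqrt_sq (norm_nonneg _), Real.sqrt_sq (norm_nonneg _)] at this
end

section
/- Let A : H₁ → H₂ be a bounded linear operator with ‖A‖ > 0 and let T : H₂ → H₂ be quasi-nonexpansive with (im A) ∩ Fix T ≠ ∅. Then the fixed point set of the Landweber-type operator V := Id + ‖A‖⁻² A*(T − Id)A equals A⁻¹(Fix T), i.e., Vx = x if and only if T(Ax) = Ax. -/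
/-!
If `A† (T (A x) - A x) = 0`, then `T (A x) - A x` is orthogonal to the range of `A`, in particular to
`A x - A w` for a point `A w ∈ Fix T`. Pythagoras then gives
`‖T (A x) - A w‖² = ‖T (A x) - A x‖² + ‖A x - A w‖²`, and quasi-nonexpansiveness bounds the left side
by `‖A x - A w‖²`, forcing `T (A x) = A x`.
-/

open scoped RealInnerProductSpace

theorem eq_of_inner_sub_eq_zero_of_norm_sub_le {E : Type*} [NormedAddCommGroup E]
    [InnerProductSpace ℝ E] {u v z : E} (horth : ⟪v - u, u - z⟫ = 0)
    (hle : ‖v - z‖ ≤ ‖u - z‖) : v = u := by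
  have hpyth : ‖v - z‖ * ‖v - z‖ = ‖v - u‖ * ‖v - u‖ + ‖u - z‖ * ‖u - z‖ := by
    simpa using norm_add_sq_eq_norm_sq_add_norm_sq_real horth
  have hsq : ‖v - z‖ * ‖v - z‖ ≤ ‖u - z‖ * ‖u - z‖ :=
    mul_self_le_mul_self (norm_nonneg _) hle
  have : ‖v - u‖ * ‖v - u‖ ≤ 0 := by linarith
  exact sub_eq_zero.mp (norm_eq_zero.mp (mul_self_eq_zero.mp (le_antisymm this (mul_self_nonneg _))))

theorem apply_eq_of_adjoint_apply_sub_eq_zero {H₁ H₂ : Type*} [NormedAddCommGroup H₁]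
    [InnerProductSpace ℝ H₁] [CompleteSpace H₁] [NormedAddCommGroup H₂] [InnerProductSpace ℝ H₂]
    [CompleteSpace H₂] (A : H₁ →L[ℝ] H₂) {T : H₂ → H₂}
    (hT : ∀ u z : H₂, T z = z → ‖T u - z‖ ≤ ‖u - z‖) {w x : H₁} (hw : T (A w) = A w)
    (hx : ContinuousLinearMap.adjoint A (T (A x) - A x) = 0) : T (A x) = A x := by
  have horth : ⟪T (A x) - A x, A x - A w⟫ = 0 := by
    rw [← map_sub, ← ContinuousLinearMap.adjoint_inner_left, hx, inner_zero_left]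
  exact eq_of_inner_sub_eq_zero_of_norm_sub_le horth (hT _ _ hw)

theorem stmt_8_general {H₁ H₂ : Type*} [NormedAddCommGroup H₁] [InnerProductSpace ℝ H₁]
    [CompleteSpace H₁] [NormedAddCommGroup H₂] [InnerProductSpace ℝ H₂] [CompleteSpace H₂]
    (A : H₁ →L[ℝ] H₂) (hA : ‖A‖ > 0)
    (T : H₂ → H₂)
    (hT : ∀ (u z : H₂), T z = z → ‖T u - z‖ ≤ ‖u - z‖)
    (him : ∃ w : H₁, T (A w) = A w)
    (V : H₁ → H₁)
    (hV : ∀ x : H₁, V x = x + (‖A‖ ^ 2)⁻¹ • (ContinuousLinearMap.adjoint A) (T (A x) - A x)) :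
    ∀ x : H₁, V x = x ↔ T (A x) = A x := by
  intro x
  obtain ⟨w, hw⟩ := him
  rw [hV x, add_eq_left, smul_eq_zero, or_iff_right (by positivity)]
  constructor
  · exact apply_eq_of_adjoint_apply_sub_eq_zero A hT hw
  · intro h
    rw [h, sub_self, map_zero]

theorem stmt_8 {H₁ H₂ : Type*} [NormedAddCommGroup H₁] [InnerProductSpace ℝ H₁]
    [CompleteSpace H₁] [NormedAddCommGroup H₂] [InnerProductSpace ℝ H₂] [CompleteSpace H₂]
    (A : H₁ →L[ℝ] H₂) (hA : ‖A‖ > 0)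
    (T : H₂ → H₂)
    (hfix : ∃ z : H₂, T z = z)
    (hT : ∀ (u z : H₂), T z = z → ‖T u - z‖ ≤ ‖u - z‖)
    (him : ∃ w : H₁, T (A w) = A w)
    (V : H₁ → H₁)
    (hV : ∀ x : H₁, V x = x + (‖A‖ ^ 2)⁻¹ • (ContinuousLinearMap.adjoint A) (T (A x) - A x)) :
    ∀ x : H₁, V x = x ↔ T (A x) = A x :=
  stmt_8_general A hA T hT him V hV
end

section
/- Let A : H₁ → H₂ be a bounded linear operator with ‖A‖ > 0 and let T : H₂ → H₂ be α-strongly quasi-nonexpansive (α ≥ 0) with (im A) ∩ Fix T ≠ ∅. Then the Landweber-type operator V := Id + ‖A‖⁻² A*(T − Id)A is α-strongly quasi-nonexpansive. -/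
open scoped RealInnerProductSpace

/-!
Write `e = T (A x) - A x`, so that `V x - x = ‖A‖⁻² A* e`. Strong quasi-nonexpansiveness of `T`
at the fixed point `A z` is the inner-product bound `2 ⟪A x - A z, e⟫ ≤ -(1 + α) ‖e‖²`, which
transfers through the adjoint to `2 ⟪x - z, V x - x⟫ ≤ -(1 + α) ‖A‖⁻² ‖e‖²`; since
`‖A* e‖ ≤ ‖A‖ ‖e‖`, also `‖V x - x‖² ≤ ‖A‖⁻² ‖e‖²`, and these two bounds are exactly what the
inequality for `V` needs.
-/

section InnerProductSpace

variable {E : Type*} [NormedAddCommGroup E] [InnerProductSpace ℝ E]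

lemma two_inner_le_of_norm_sub_sq_le {u v z : E} {α : ℝ}
    (h : ‖v - z‖ ^ 2 ≤ ‖u - z‖ ^ 2 - α * ‖v - u‖ ^ 2) :
    2 * ⟪u - z, v - u⟫ ≤ -(1 + α) * ‖v - u‖ ^ 2 := by
  rw [show v - z = (u - z) + (v - u) by abel, norm_add_sq_real] at h
  linarith

lemma norm_add_sq_le_of_two_inner_le {a d : E} {α β : ℝ} (hα : -1 ≤ α)
    (hinner : 2 * ⟪a, d⟫ ≤ -(1 + α) * β) (hd : ‖d‖ ^ 2 ≤ β) :
    ‖a + d‖ ^ 2 ≤ ‖a‖ ^ 2 - α * ‖d‖ ^ 2 := by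
  rw [norm_add_sq_real]
  nlinarith

end InnerProductSpace

lemma inv_sq_opNorm_mul_sq_norm_adjoint_apply_le {H₁ H₂ : Type*}
    [NormedAddCommGroup H₁] [InnerProductSpace ℝ H₁] [CompleteSpace H₁]
    [NormedAddCommGroup H₂] [InnerProductSpace ℝ H₂] [CompleteSpace H₂]
    (A : H₁ →L[ℝ] H₂) (y : H₂) :
    (‖A‖ ^ 2)⁻¹ * ‖ContinuousLinearMap.adjoint A y‖ ^ 2 ≤ ‖y‖ ^ 2 := by
  have hle : ‖ContinuousLinearMap.adjoint A y‖ ≤ ‖A‖ * ‖y‖ := by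
    simpa only [LinearIsometryEquiv.norm_map] using (ContinuousLinearMap.adjoint A).le_opNorm y
  rcases (norm_nonneg A).eq_or_lt with hA | hA
  · simp [← hA]
  · rw [inv_mul_le_iff₀ (by positivity), ← mul_pow]
    exact pow_le_pow_left₀ (norm_nonneg _) hle 2

theorem stmt_9_general {H₁ H₂ : Type*} [NormedAddCommGroup H₁] [InnerProductSpace ℝ H₁]
    [CompleteSpace H₁] [NormedAddCommGroup H₂] [InnerProductSpace ℝ H₂] [CompleteSpace H₂]
    (A : H₁ →L[ℝ] H₂)
    (T : H₂ → H₂) (α : ℝ) (hα : α ≥ 0)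
    (hT : ∀ (u z : H₂), T z = z → ‖T u - z‖ ^ 2 ≤ ‖u - z‖ ^ 2 - α * ‖T u - u‖ ^ 2)
    (V : H₁ → H₁)
    (hV : ∀ x : H₁, V x = x + (‖A‖ ^ 2)⁻¹ • (ContinuousLinearMap.adjoint A) (T (A x) - A x)) :
    ∀ (x z : H₁), T (A z) = A z → ‖V x - z‖ ^ 2 ≤ ‖x - z‖ ^ 2 - α * ‖V x - x‖ ^ 2 := by
  intro x z hz
  set c : ℝ := (‖A‖ ^ 2)⁻¹
  set e : H₂ := T (A x) - A x
  have hc : 0 ≤ c := by positivity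
  have hstep : V x - x = c • ContinuousLinearMap.adjoint A e := by rw [hV x]; abel
  have hTinner : 2 * ⟪A x - A z, e⟫ ≤ -(1 + α) * ‖e‖ ^ 2 :=
    two_inner_le_of_norm_sub_sq_le (hT (A x) (A z) hz)
  rw [show V x - z = (x - z) + (V x - x) by abel]
  refine norm_add_sq_le_of_two_inner_le (β := c * ‖e‖ ^ 2) (by linarith) ?_ ?_
  · rw [hstep, real_inner_smul_right, ContinuousLinearMap.adjoint_inner_right, map_sub]
    nlinarith [mul_le_mul_of_nonneg_left hTinner hc]
  · rw [hstep, norm_smul, mul_pow, Real.norm_eq_abs, sq_abs, sq, mul_assoc]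
    exact mul_le_mul_of_nonneg_left (inv_sq_opNorm_mul_sq_norm_adjoint_apply_le A e) hc

theorem stmt_9 {H₁ H₂ : Type*} [NormedAddCommGroup H₁] [InnerProductSpace ℝ H₁]
    [CompleteSpace H₁] [NormedAddCommGroup H₂] [InnerProductSpace ℝ H₂] [CompleteSpace H₂]
    (A : H₁ →L[ℝ] H₂) (hA : ‖A‖ > 0)
    (T : H₂ → H₂) (α : ℝ) (hα : α ≥ 0)
    (hfix : ∃ z : H₂, T z = z)
    (hT : ∀ (u z : H₂), T z = z → ‖T u - z‖ ^ 2 ≤ ‖u - z‖ ^ 2 - α * ‖T u - u‖ ^ 2)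
    (him : ∃ w : H₁, T (A w) = A w)
    (V : H₁ → H₁)
    (hV : ∀ x : H₁, V x = x + (‖A‖ ^ 2)⁻¹ • (ContinuousLinearMap.adjoint A) (T (A x) - A x)) :
    ∀ (x z : H₁), T (A z) = A z → ‖V x - z‖ ^ 2 ≤ ‖x - z‖ ^ 2 - α * ‖V x - x‖ ^ 2 :=
  stmt_9_general A T α hα hT V hV
end

section
/- Let A : H₁ → H₂ be bounded linear with ‖A‖ > 0 and T : H₂ → H₂ be α-SQNE (α ≥ 0) with (im A) ∩ Fix T ≠ ∅. Define the extrapolated Landweber-type operator V_τ x := x + σ(x) A*(TAx − Ax) where σ(x) = ‖TAx − Ax‖²/‖A*(TAx − Ax)‖² if Ax ∉ Fix T, and V_τ x := x otherwise. Then Fix V_τ = A⁻¹(Fix T) and V_τ is α-strongly quasi-nonexpansive. -/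
open scoped RealInnerProductSpace

/-!
The SQNE inequality for `T` at a fixed point `A z`, expanded around `A x`, gives
`2⟪A*(TAx - Ax), x - z⟫ ≤ -(1 + α)‖TAx - Ax‖²`. Taking `z` with `A z ∈ Fix T` shows that
`A*(TAx - Ax) ≠ 0` off `A⁻¹(Fix T)`, hence `V_τ x ≠ x` there; and the step length
`σ = ‖TAx - Ax‖² / ‖A*(TAx - Ax)‖²` is exactly the one for which `‖V_τ x - x‖² = σ‖TAx - Ax‖²`,
which turns the same inequality into the SQNE inequality for `V_τ`.
-/

open ContinuousLinearMap

section

variable {E : Type*} [NormedAddCommGroup E] [InnerProductSpace ℝ E]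

theorem two_inner_sub_le_of_sq_norm_le {T : E → E} {α : ℝ}
    (hT : ∀ (u z : E), T z = z → ‖T u - z‖ ^ 2 ≤ ‖u - z‖ ^ 2 - α * ‖T u - u‖ ^ 2)
    (u : E) {z : E} (hz : T z = z) :
    2 * ⟪T u - u, u - z⟫ ≤ -(1 + α) * ‖T u - u‖ ^ 2 := by
  have h := hT u z hz
  rw [show T u - z = (T u - u) + (u - z) by abel, norm_add_sq_real] at h
  linarith

theorem norm_add_div_smul_sub_sq_le {x y z : E} {r α : ℝ} (hy : y ≠ 0) (hr : 0 ≤ r)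
    (hinner : 2 * ⟪y, x - z⟫ ≤ -(1 + α) * r) :
    ‖x + (r / ‖y‖ ^ 2) • y - z‖ ^ 2 ≤ ‖x - z‖ ^ 2 - α * ‖(r / ‖y‖ ^ 2) • y‖ ^ 2 := by
  set σ := r / ‖y‖ ^ 2
  have hσ : 0 ≤ σ := by positivity
  have hstep : ‖σ • y‖ ^ 2 = σ * r := by
    rw [norm_smul, Real.norm_of_nonneg hσ, mul_pow, sq σ, mul_assoc,
      div_mul_cancel₀ r (by positivity)]
  rw [show x + σ • y - z = (x - z) + σ • y by abel, norm_add_sq_real, real_inner_smul_right,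
    real_inner_comm, hstep]
  nlinarith [mul_le_mul_of_nonneg_left hinner hσ]

end

section

variable {H₁ H₂ : Type*} [NormedAddCommGroup H₁] [InnerProductSpace ℝ H₁] [CompleteSpace H₁]
  [NormedAddCommGroup H₂] [InnerProductSpace ℝ H₂] [CompleteSpace H₂]
  {A : H₁ →L[ℝ] H₂} {T : H₂ → H₂} {α : ℝ}

theorem two_inner_adjoint_sub_le
    (hT : ∀ (u z : H₂), T z = z → ‖T u - z‖ ^ 2 ≤ ‖u - z‖ ^ 2 - α * ‖T u - u‖ ^ 2)
    (x : H₁) {z : H₁} (hz : T (A z) = A z) :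
    2 * ⟪adjoint A (T (A x) - A x), x - z⟫ ≤ -(1 + α) * ‖T (A x) - A x‖ ^ 2 := by
  rw [adjoint_inner_left, map_sub]
  exact two_inner_sub_le_of_sq_norm_le hT (A x) hz

theorem adjoint_sub_ne_zero (hα : 0 ≤ α)
    (hT : ∀ (u z : H₂), T z = z → ‖T u - z‖ ^ 2 ≤ ‖u - z‖ ^ 2 - α * ‖T u - u‖ ^ 2)
    (him : ∃ w : H₁, T (A w) = A w) {x : H₁} (hx : T (A x) ≠ A x) :
    adjoint A (T (A x) - A x) ≠ 0 := by
  obtain ⟨w, hw⟩ := him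
  have hpos : 0 < ‖T (A x) - A x‖ ^ 2 := by
    have := sub_ne_zero.mpr hx
    positivity
  intro h0
  have := two_inner_adjoint_sub_le hT x hw
  rw [h0, inner_zero_left] at this
  nlinarith

end

theorem stmt_10_general {H₁ H₂ : Type*} [NormedAddCommGroup H₁] [InnerProductSpace ℝ H₁]
    [CompleteSpace H₁] [NormedAddCommGroup H₂] [InnerProductSpace ℝ H₂] [CompleteSpace H₂]
    (A : H₁ →L[ℝ] H₂)
    (T : H₂ → H₂) (α : ℝ) (hα : α ≥ 0)
    (hT : ∀ (u z : H₂), T z = z → ‖T u - z‖ ^ 2 ≤ ‖u - z‖ ^ 2 - α * ‖T u - u‖ ^ 2)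
    (him : ∃ w : H₁, T (A w) = A w)
    (Vτ : H₁ → H₁)
    (hV₁ : ∀ x : H₁, T (A x) ≠ A x →
      Vτ x = x + (‖T (A x) - A x‖ ^ 2 / ‖(ContinuousLinearMap.adjoint A) (T (A x) - A x)‖ ^ 2) •
        (ContinuousLinearMap.adjoint A) (T (A x) - A x))
    (hV₂ : ∀ x : H₁, T (A x) = A x → Vτ x = x) :
    (∀ x : H₁, Vτ x = x ↔ T (A x) = A x) ∧
      (∀ (x z : H₁), T (A z) = A z → ‖Vτ x - z‖ ^ 2 ≤ ‖x - z‖ ^ 2 - α * ‖Vτ x - x‖ ^ 2) := by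
  refine ⟨fun x => ⟨fun hVx => ?_, hV₂ x⟩, fun x z hz => ?_⟩
  · by_contra hx
    have hy := adjoint_sub_ne_zero hα hT him hx
    have hu : 0 < ‖T (A x) - A x‖ := norm_pos_iff.mpr (sub_ne_zero.mpr hx)
    have hstep := smul_ne_zero (div_pos (pow_pos hu 2) (pow_pos (norm_pos_iff.mpr hy) 2)).ne' hy
    rw [hV₁ x hx, add_eq_left] at hVx
    exact hstep hVx
  · by_cases hx : T (A x) = A x
    · simp [hV₂ x hx]
    · rw [hV₁ x hx, add_sub_cancel_left]
      exact norm_add_div_smul_sub_sq_le (adjoint_sub_ne_zero hα hT him hx) (by positivity)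
        (two_inner_adjoint_sub_le hT x hz)

theorem stmt_10 {H₁ H₂ : Type*} [NormedAddCommGroup H₁] [InnerProductSpace ℝ H₁]
    [CompleteSpace H₁] [NormedAddCommGroup H₂] [InnerProductSpace ℝ H₂] [CompleteSpace H₂]
    (A : H₁ →L[ℝ] H₂) (hA : ‖A‖ > 0)
    (T : H₂ → H₂) (α : ℝ) (hα : α ≥ 0)
    (hfix : ∃ z : H₂, T z = z)
    (hT : ∀ (u z : H₂), T z = z → ‖T u - z‖ ^ 2 ≤ ‖u - z‖ ^ 2 - α * ‖T u - u‖ ^ 2)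
    (him : ∃ w : H₁, T (A w) = A w)
    (Vτ : H₁ → H₁)
    (hV₁ : ∀ x : H₁, T (A x) ≠ A x →
      Vτ x = x + (‖T (A x) - A x‖ ^ 2 / ‖(ContinuousLinearMap.adjoint A) (T (A x) - A x)‖ ^ 2) •
        (ContinuousLinearMap.adjoint A) (T (A x) - A x))
    (hV₂ : ∀ x : H₁, T (A x) = A x → Vτ x = x) :
    (∀ x : H₁, Vτ x = x ↔ T (A x) = A x) ∧
      (∀ (x z : H₁), T (A z) = A z → ‖Vτ x - z‖ ^ 2 ≤ ‖x - z‖ ^ 2 - α * ‖Vτ x - x‖ ^ 2) :=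
  stmt_10_general A T α hα hT him Vτ hV₁ hV₂
end

section
/- Let A : H₁ → H₂ be bounded linear with ‖A‖ > 0 and T : H₂ → H₂ be quasi-nonexpansive with (im A) ∩ Fix T ≠ ∅. If T satisfies the demi-closedness principle (whenever yᵏ ⇀ y weakly and ‖Tyᵏ − yᵏ‖ → 0, then y ∈ Fix T), then the Landweber-type operator V := Id + ‖A‖⁻² A*(T − Id)A also satisfies the demi-closedness principle: whenever xᵏ ⇀ x weakly in H₁ and ‖Vxᵏ − xᵏ‖ → 0, then x ∈ Fix V = A⁻¹(Fix T). -/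
/-!
If `xᵏ ⇀ x` and `‖Vxᵏ - xᵏ‖ → 0`, then `A*(TAxᵏ - Axᵏ) = ‖A‖² (Vxᵏ - xᵏ) → 0`. For a point
`w` with `Aw ∈ Fix T`, quasi-nonexpansiveness of `T` gives
`‖TAxᵏ - Axᵏ‖² ≤ 2⟪TAxᵏ - Axᵏ, Aw - Axᵏ⟫ = 2⟪A*(TAxᵏ - Axᵏ), w - xᵏ⟫`, and weakly convergent
sequences are bounded (Banach–Steinhaus), so `‖TAxᵏ - Axᵏ‖ → 0`. Since `A` is continuous,
`Axᵏ ⇀ Ax`, and demi-closedness of `T` gives `Ax ∈ Fix T`, i.e. `Vx = x`.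
-/

open scoped RealInnerProductSpace
open Filter Topology

section WeakConvergence

variable {E F : Type*} [NormedAddCommGroup E] [InnerProductSpace ℝ E]
  [NormedAddCommGroup F] [InnerProductSpace ℝ F]

def WeakTendsto (x : ℕ → E) (xlim : E) : Prop :=
  ∀ u : E, Tendsto (fun k => ⟪x k - xlim, u⟫) atTop (𝓝 0)

theorem WeakTendsto.exists_norm_sub_le [CompleteSpace E] {x : ℕ → E} {xlim : E}
    (hx : WeakTendsto x xlim) : ∃ M, ∀ k, ‖x k - xlim‖ ≤ M := by
  obtain ⟨M, hM⟩ := banach_steinhaus (g := fun k => innerSL ℝ (x k - xlim)) fun u => by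
    obtain ⟨C, hC⟩ := (hx u).norm.bddAbove_range
    exact ⟨C, fun k => hC (Set.mem_range_self k)⟩
  exact ⟨M, fun k => by simpa only [innerSL_apply_norm] using hM k⟩

theorem WeakTendsto.map [CompleteSpace E] [CompleteSpace F] {x : ℕ → E} {xlim : E}
    (hx : WeakTendsto x xlim) (A : E →L[ℝ] F) : WeakTendsto (fun k => A (x k)) (A xlim) :=
  fun v => by
    simpa only [← map_sub, ContinuousLinearMap.adjoint_inner_right] using hx (A.adjoint v)

end WeakConvergence

theorem sq_norm_sub_le_two_inner_of_norm_sub_le {E : Type*} [NormedAddCommGroup E]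
    [InnerProductSpace ℝ E] {a u z : E} (h : ‖a - z‖ ≤ ‖u - z‖) :
    ‖a - u‖ ^ 2 ≤ 2 * ⟪a - u, z - u⟫ := by
  have hsq : ‖a - z‖ ^ 2 ≤ ‖u - z‖ ^ 2 := pow_le_pow_left₀ (norm_nonneg _) h 2
  have hexp : ‖a - z‖ ^ 2 = ‖a - u‖ ^ 2 - 2 * ⟪a - u, z - u⟫ + ‖u - z‖ ^ 2 := by
    rw [show a - z = (a - u) - (z - u) by abel, norm_sub_sq_real, ← norm_neg (z - u), neg_sub]
  linarith

section Landweber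

variable {E F : Type*} [NormedAddCommGroup E] [InnerProductSpace ℝ E] [CompleteSpace E]
  [NormedAddCommGroup F] [InnerProductSpace ℝ F] [CompleteSpace F]

theorem sq_norm_sub_le_two_norm_adjoint_mul (A : E →L[ℝ] F) (T : F → F) {w x : E}
    (hw : ‖T (A x) - A w‖ ≤ ‖A x - A w‖) :
    ‖T (A x) - A x‖ ^ 2 ≤ 2 * ‖A.adjoint (T (A x) - A x)‖ * ‖w - x‖ := by
  calc ‖T (A x) - A x‖ ^ 2 ≤ 2 * ⟪T (A x) - A x, A w - A x⟫ :=
        sq_norm_sub_le_two_inner_of_norm_sub_le hw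
    _ = 2 * ⟪A.adjoint (T (A x) - A x), w - x⟫ := by
        rw [ContinuousLinearMap.adjoint_inner_left, map_sub]
    _ ≤ 2 * ‖A.adjoint (T (A x) - A x)‖ * ‖w - x‖ := by
        rw [mul_assoc]; gcongr; exact real_inner_le_norm _ _

theorem tendsto_norm_sub_of_tendsto_norm_adjoint (A : E →L[ℝ] F) (T : F → F) {w xlim : E}
    (hw : ∀ u, ‖T u - A w‖ ≤ ‖u - A w‖) {x : ℕ → E} {M : ℝ} (hM : ∀ k, ‖x k - xlim‖ ≤ M)
    (h : Tendsto (fun k => ‖A.adjoint (T (A (x k)) - A (x k))‖) atTop (𝓝 0)) :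
    Tendsto (fun k => ‖T (A (x k)) - A (x k)‖) atTop (𝓝 0) := by
  have hbound : ∀ k, ‖T (A (x k)) - A (x k)‖ ^ 2
      ≤ 2 * (‖w - xlim‖ + M) * ‖A.adjoint (T (A (x k)) - A (x k))‖ := fun k => by
    have hwx : ‖w - x k‖ ≤ ‖w - xlim‖ + M := by
      calc ‖w - x k‖ = ‖(w - xlim) - (x k - xlim)‖ := by rw [sub_sub_sub_cancel_right]
        _ ≤ ‖w - xlim‖ + ‖x k - xlim‖ := norm_sub_le _ _
        _ ≤ ‖w - xlim‖ + M := by gcongr; exact hM k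
    calc ‖T (A (x k)) - A (x k)‖ ^ 2
        ≤ 2 * ‖A.adjoint (T (A (x k)) - A (x k))‖ * ‖w - x k‖ :=
          sq_norm_sub_le_two_norm_adjoint_mul A T (hw _)
      _ ≤ 2 * (‖w - xlim‖ + M) * ‖A.adjoint (T (A (x k)) - A (x k))‖ := by
          rw [mul_right_comm]; gcongr
  have hsq : Tendsto (fun k => ‖T (A (x k)) - A (x k)‖ ^ 2) atTop (𝓝 0) :=
    squeeze_zero (fun k => by positivity) hbound (by simpa using h.const_mul _)
  simpa only [Real.sqrt_sq (norm_nonneg _), Real.sqrt_zero] using hsq.sqrt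

theorem adjoint_apply_eq_sq_norm_smul_sub (A : E →L[ℝ] F) (T : F → F) {V : E → E}
    (hV : ∀ x, V x = x + (‖A‖ ^ 2)⁻¹ • A.adjoint (T (A x) - A x)) (x : E) :
    A.adjoint (T (A x) - A x) = ‖A‖ ^ 2 • (V x - x) := by
  rw [hV, add_sub_cancel_left, smul_smul]
  rcases eq_or_ne ‖A‖ 0 with hA | hA
  · simp [norm_eq_zero.mp hA]
  · rw [mul_inv_cancel₀ (pow_ne_zero 2 hA), one_smul]

end Landweber

theorem stmt_12_general {H₁ H₂ : Type*} [NormedAddCommGroup H₁] [InnerProductSpace ℝ H₁]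
    [CompleteSpace H₁] [NormedAddCommGroup H₂] [InnerProductSpace ℝ H₂] [CompleteSpace H₂]
    (A : H₁ →L[ℝ] H₂)
    (T : H₂ → H₂)
    (hT : ∀ (u z : H₂), T z = z → ‖T u - z‖ ≤ ‖u - z‖)
    (him : ∃ w : H₁, T (A w) = A w)
    (hDC : ∀ (y : ℕ → H₂) (ylim : H₂),
      (∀ u : H₂, Tendsto (fun k => ⟪y k - ylim, u⟫) atTop (𝓝 0)) →
      Tendsto (fun k => ‖T (y k) - y k‖) atTop (𝓝 0) →
      T ylim = ylim)
    (V : H₁ → H₁)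
    (hV : ∀ x : H₁, V x = x + (‖A‖ ^ 2)⁻¹ • (ContinuousLinearMap.adjoint A) (T (A x) - A x)) :
    ∀ (x : ℕ → H₁) (xlim : H₁),
      (∀ u : H₁, Tendsto (fun k => ⟪x k - xlim, u⟫) atTop (𝓝 0)) →
      Tendsto (fun k => ‖V (x k) - x k‖) atTop (𝓝 0) →
      V xlim = xlim ∧ T (A xlim) = A xlim := by
  intro x xlim hx hVx
  obtain ⟨w, hw⟩ := him
  obtain ⟨M, hM⟩ := WeakTendsto.exists_norm_sub_le hx
  have hadj : Tendsto (fun k => ‖A.adjoint (T (A (x k)) - A (x k))‖) atTop (𝓝 0) := by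
    have heq : ∀ k, ‖A.adjoint (T (A (x k)) - A (x k))‖ = ‖A‖ ^ 2 * ‖V (x k) - x k‖ := fun k => by
      rw [adjoint_apply_eq_sq_norm_smul_sub A T hV, norm_smul, norm_pow, norm_norm]
    simpa only [heq, mul_zero] using hVx.const_mul (‖A‖ ^ 2)
  have hfix : T (A xlim) = A xlim :=
    hDC _ _ (WeakTendsto.map hx A)
      (tendsto_norm_sub_of_tendsto_norm_adjoint A T (fun u => hT u _ hw) hM hadj)
  exact ⟨by rw [hV, hfix, sub_self, map_zero, smul_zero, add_zero], hfix⟩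

theorem stmt_12 {H₁ H₂ : Type*} [NormedAddCommGroup H₁] [InnerProductSpace ℝ H₁]
    [CompleteSpace H₁] [NormedAddCommGroup H₂] [InnerProductSpace ℝ H₂] [CompleteSpace H₂]
    (A : H₁ →L[ℝ] H₂) (hA : ‖A‖ > 0)
    (T : H₂ → H₂)
    (hfix : ∃ z : H₂, T z = z)
    (hT : ∀ (u z : H₂), T z = z → ‖T u - z‖ ≤ ‖u - z‖)
    (him : ∃ w : H₁, T (A w) = A w)
    (hDC : ∀ (y : ℕ → H₂) (ylim : H₂),
      (∀ u : H₂, Tendsto (fun k => ⟪y k - ylim, u⟫) atTop (𝓝 0)) →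
      Tendsto (fun k => ‖T (y k) - y k‖) atTop (𝓝 0) →
      T ylim = ylim)
    (V : H₁ → H₁)
    (hV : ∀ x : H₁, V x = x + (‖A‖ ^ 2)⁻¹ • (ContinuousLinearMap.adjoint A) (T (A x) - A x)) :
    ∀ (x : ℕ → H₁) (xlim : H₁),
      (∀ u : H₁, Tendsto (fun k => ⟪x k - xlim, u⟫) atTop (𝓝 0)) →
      Tendsto (fun k => ‖V (x k) - x k‖) atTop (𝓝 0) →
      V xlim = xlim ∧ T (A xlim) = A xlim :=
  stmt_12_general A T hT him hDC V hV
end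

section
/- Let U : H₁ → H₁ be β-SQNE and W : H₁ → H₁ be α-SQNE with α, β > 0 and Fix U ∩ Fix W ≠ ∅. Then the composition R := U ∘ W satisfies Fix R = Fix U ∩ Fix W and R is γ-SQNE with γ = (1/α + 1/β)⁻¹. -/
open scoped RealInnerProductSpace

theorem stmt_14 {H₁ : Type*} [NormedAddCommGroup H₁] [InnerProductSpace ℝ H₁]
    (U W : H₁ → H₁) (α β : ℝ) (hα : α > 0) (hβ : β > 0)
    (hUfix : ∃ z : H₁, U z = z) (hWfix : ∃ z : H₁, W z = z)
    (hU : ∀ (x z : H₁), U z = z → ‖U x - z‖ ^ 2 ≤ ‖x - z‖ ^ 2 - β * ‖U x - x‖ ^ 2)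
    (hW : ∀ (x z : H₁), W z = z → ‖W x - z‖ ^ 2 ≤ ‖x - z‖ ^ 2 - α * ‖W x - x‖ ^ 2)
    (hcommon : ∃ z : H₁, U z = z ∧ W z = z) :
    (∀ x : H₁, U (W x) = x ↔ (U x = x ∧ W x = x)) ∧
      (∀ (x z : H₁), U z = z → W z = z →
        ‖U (W x) - z‖ ^ 2 ≤ ‖x - z‖ ^ 2 - (1 / α + 1 / β)⁻¹ * ‖U (W x) - x‖ ^ 2) := by
  obtain ⟨z₀, hz₀U, hz₀W⟩ := hcommon
  constructor
  · intro x
    constructor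
    · intro hfix
      have h1 := hU (W x) z₀ hz₀U
      have h2 := hW x z₀ hz₀W
      rw [hfix] at h1
      have hw : W x = x := by
        have hrev : ‖x - W x‖ = ‖W x - x‖ := norm_sub_rev _ _
        rw [hrev] at h1
        have ht : ‖W x - x‖ ^ 2 = 0 := by
          have h3 : ‖W x - x‖ ^ 2 ≤ 0 := by
            nlinarith [sq_nonneg ‖W x - x‖, mul_nonneg hα.le (sq_nonneg ‖W x - x‖),
              mul_nonneg hβ.le (sq_nonneg ‖W x - x‖)]
          exact le_antisymm h3 (sq_nonneg _)
        have := pow_eq_zero_iff (two_ne_zero) |>.mp ht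
        exact sub_eq_zero.mp (norm_eq_zero.mp this)
      rw [hw] at hfix
      exact ⟨hfix, hw⟩
    · rintro ⟨hu, hw⟩
      rw [hw, hu]
  · intro x z hzU hzW
    have h1 := hU (W x) z hzU
    have h2 := hW x z hzW
    set a := ‖W x - x‖ with ha
    set b := ‖U (W x) - W x‖ with hb
    set c := ‖U (W x) - x‖ with hc
    have htri : c ≤ b + a := by
      have : U (W x) - x = (U (W x) - W x) + (W x - x) := by abel
      rw [hc, this]
      exact norm_add_le _ _
    have ha0 : 0 ≤ a := norm_nonneg _
    have hb0 : 0 ≤ b := norm_nonneg _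
    have hc0 : 0 ≤ c := norm_nonneg _
    have hγ : (1 / α + 1 / β)⁻¹ = α * β / (α + β) := by
      field_simp
      ring
    rw [hγ]
    have hab : 0 < α + β := by linarith
    have key : α * β / (α + β) * c ^ 2 ≤ α * a ^ 2 + β * b ^ 2 := by
      rw [div_mul_eq_mul_div, div_le_iff₀ hab]
      have hc2 : c ^ 2 ≤ (b + a) ^ 2 := by nlinarith
      have := mul_le_mul_of_nonneg_left hc2 (le_of_lt (mul_pos hα hβ))
      nlinarith [sq_nonneg (α * a - β * b)]
    linarith
end

section
/- Let A : H₁ → H₂ be bounded linear with ‖A‖ > 0 and Q ⊆ H₂ nonempty closed convex. The proximity function f(x) := (1/2)‖P_Q(Ax) − Ax‖² is convex and differentiable with gradient ∇f(x) = A*(Ax − P_Q(Ax)); moreover the fixed points of the Landweber operator V := Id + ‖A‖⁻² A*(P_Q − Id)A are exactly the minimizers of f over H₁. -/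
/-!
The proximity function `φ y = ½‖P_Q y - y‖²` of a nearest-point map satisfies the two-sided
first-order bounds
`φ z + ⟪z - P_Q z, u - z⟫ ≤ φ u ≤ φ z + ⟪z - P_Q z, u - z⟫ + ½‖u - z‖²`:
the upper one because `P_Q z` competes with `P_Q u` as a point of `Q`, the lower one by the
variational inequality characterising the projection onto a convex set.  Hence `φ` is convex with
gradient `Id - P_Q`, and the chain rule gives the gradient `A* (A x - P_Q (A x))` of `f = φ ∘ A`.
A convex differentiable function is minimised exactly where its gradient vanishes, and since
`V x - x = -‖A‖⁻² ∇f(x)`, these points are exactly the fixed points of `V`.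
-/

open scoped RealInnerProductSpace
open Set Filter Topology Asymptotics ContinuousLinearMap

section FirstOrder

variable {E : Type*} [NormedAddCommGroup E] [InnerProductSpace ℝ E] {f : E → ℝ}

theorem convexOn_univ_of_add_inner_le {g : E → E} (h : ∀ x y, f x + ⟪g x, y - x⟫ ≤ f y) :
    ConvexOn ℝ univ f := by
  refine ⟨convex_univ, fun x _ y _ a b ha hb hab => ?_⟩
  set m := a • x + b • y
  have hdir : a • (x - m) + b • (y - m) = 0 := by
    rw [smul_sub, smul_sub, sub_add_sub_comm, ← add_smul, hab, one_smul, sub_self]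
  have hinner : a * ⟪g m, x - m⟫ + b * ⟪g m, y - m⟫ = 0 := by
    rw [← real_inner_smul_right, ← real_inner_smul_right, ← inner_add_right, hdir,
      inner_zero_right]
  have hx := mul_le_mul_of_nonneg_left (h m x) ha
  have hy := mul_le_mul_of_nonneg_left (h m y) hb
  have hfm : a * f m + b * f m = f m := by rw [← add_mul, hab, one_mul]
  rw [mul_add] at hx hy
  simp only [smul_eq_mul]
  linarith

variable [CompleteSpace E]

theorem hasGradientAt_of_abs_sub_inner_le {g x : E} (C : ℝ)
    (h : ∀ y, |f y - f x - ⟪g, y - x⟫| ≤ C * ‖y - x‖ ^ 2) : HasGradientAt f g x := by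
  rw [hasGradientAt_iff_isLittleO]
  have hquad : (fun y => ‖y - x‖ ^ 2) =o[𝓝 x] fun y => y - x :=
    (isLittleO_norm_pow_id one_lt_two).comp_tendsto (tendsto_sub_nhds_zero_iff.2 tendsto_id)
  refine IsBigO.trans_isLittleO (IsBigO.of_bound C (Eventually.of_forall fun y => ?_)) hquad
  simpa only [Real.norm_eq_abs, abs_of_nonneg (sq_nonneg ‖y - x‖)] using h y

theorem HasGradientAt.forall_le_iff_eq_zero {g x : E} (hg : HasGradientAt f g x)
    (hlow : ∀ y, f x + ⟪g, y - x⟫ ≤ f y) : (∀ y, f x ≤ f y) ↔ g = 0 := by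
  refine ⟨fun hmin => ?_, fun hg0 y => by simpa [hg0] using hlow y⟩
  have hdual : InnerProductSpace.toDual ℝ E g = 0 :=
    IsLocalMin.hasFDerivAt_eq_zero (Eventually.of_forall hmin)
      (hasGradientAt_iff_hasFDerivAt.1 hg)
  exact (LinearIsometryEquiv.map_eq_zero_iff _).1 hdual

theorem HasGradientAt.comp_continuousLinearMap {F : Type*} [NormedAddCommGroup F]
    [InnerProductSpace ℝ F] [CompleteSpace F] {φ : F → ℝ} {g : F} {x : E} (A : E →L[ℝ] F)
    (hφ : HasGradientAt φ g (A x)) : HasGradientAt (φ ∘ A) (adjoint A g) x := by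
  rw [hasGradientAt_iff_hasFDerivAt] at hφ ⊢
  refine (hφ.comp x A.hasFDerivAt).congr_fderiv ?_
  ext v
  simp [adjoint_inner_left]

end FirstOrder

section Proximity

variable {E : Type*} [NormedAddCommGroup E] [InnerProductSpace ℝ E] {Q : Set E} {P : E → E}

def IsNearestPointMap (Q : Set E) (P : E → E) : Prop :=
  ∀ y, P y ∈ Q ∧ ∀ w ∈ Q, ‖P y - y‖ ≤ ‖w - y‖

noncomputable def proximity (P : E → E) (y : E) : ℝ :=
  1 / 2 * ‖P y - y‖ ^ 2

theorem IsNearestPointMap.inner_sub_le_zero (hP : IsNearestPointMap Q P) (hQ : Convex ℝ Q)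
    (y : E) {w : E} (hw : w ∈ Q) : ⟪y - P y, w - P y⟫ ≤ 0 := by
  have hmem := (hP y).1
  have : Nonempty Q := ⟨⟨P y, hmem⟩⟩
  refine (norm_eq_iInf_iff_real_inner_le_zero hQ hmem).1 (le_antisymm ?_ ?_) w hw
  · exact le_ciInf fun v => by simpa only [norm_sub_rev y] using (hP y).2 v v.2
  · exact ciInf_le (f := fun v : Q => ‖y - v‖) ⟨0, forall_mem_range.2 fun _ => norm_nonneg _⟩
      ⟨P y, hmem⟩

theorem IsNearestPointMap.proximity_add_inner_le (hP : IsNearestPointMap Q P)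
    (hQ : Convex ℝ Q) (z u : E) : proximity P z + ⟪z - P z, u - z⟫ ≤ proximity P u := by
  have hvar := hP.inner_sub_le_zero hQ z (hP u).1
  have hsplit : ⟪z - P z, u - z⟫ =
      ⟪z - P z, u - P u⟫ - ‖z - P z‖ ^ 2 + ⟪z - P z, P u - P z⟫ := by
    rw [← real_inner_self_eq_norm_sq, ← inner_sub_right, ← inner_add_right]
    congr 1
    abel
  have hsq := norm_sub_sq_real (u - P u) (z - P z)
  rw [real_inner_comm] at hsq
  simp only [proximity, norm_sub_rev (P _)]
  nlinarith [sq_nonneg ‖u - P u - (z - P z)‖]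

theorem IsNearestPointMap.proximity_le_add_inner (hP : IsNearestPointMap Q P) (z u : E) :
    proximity P u ≤ proximity P z + ⟪z - P z, u - z⟫ + 1 / 2 * ‖u - z‖ ^ 2 := by
  have hle := (hP u).2 (P z) (hP z).1
  have hsq : ‖P z - u‖ ^ 2 = ‖P z - z‖ ^ 2 + 2 * ⟪z - P z, u - z⟫ + ‖u - z‖ ^ 2 := by
    rw [← sub_add_sub_cancel (P z) z u, norm_add_sq_real, ← inner_neg_neg, neg_sub, neg_sub,
      norm_sub_rev z u]
  unfold proximity
  nlinarith [norm_nonneg (P u - u)]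

theorem IsNearestPointMap.hasGradientAt_proximity [CompleteSpace E] (hP : IsNearestPointMap Q P)
    (hQ : Convex ℝ Q) (z : E) : HasGradientAt (proximity P) (z - P z) z :=
  hasGradientAt_of_abs_sub_inner_le (1 / 2) fun u => abs_le.2
    ⟨by linarith [hP.proximity_add_inner_le hQ z u, sq_nonneg ‖u - z‖],
      by linarith [hP.proximity_le_add_inner z u]⟩

end Proximity

theorem stmt_16_general {H₁ H₂ : Type*} [NormedAddCommGroup H₁] [InnerProductSpace ℝ H₁]
    [CompleteSpace H₁] [NormedAddCommGroup H₂] [InnerProductSpace ℝ H₂] [CompleteSpace H₂]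
    (A : H₁ →L[ℝ] H₂) (hA : ‖A‖ > 0)
    (Q : Set H₂) (hQconv : Convex ℝ Q)
    (PQ : H₂ → H₂)
    (hPQ : ∀ y : H₂, PQ y ∈ Q ∧ ∀ w ∈ Q, ‖PQ y - y‖ ≤ ‖w - y‖)
    (f : H₁ → ℝ)
    (hf : ∀ x : H₁, f x = (1 / 2) * ‖PQ (A x) - A x‖ ^ 2)
    (V : H₁ → H₁)
    (hV : ∀ x : H₁, V x = x + (‖A‖ ^ 2)⁻¹ • (ContinuousLinearMap.adjoint A) (PQ (A x) - A x)) :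
    ConvexOn ℝ Set.univ f ∧
      (∀ x : H₁, HasGradientAt f ((ContinuousLinearMap.adjoint A) (A x - PQ (A x))) x) ∧
      (∀ x : H₁, V x = x ↔ ∀ y : H₁, f x ≤ f y) := by
  have hP : IsNearestPointMap Q PQ := hPQ
  have hfA : f = proximity PQ ∘ A := funext hf
  have hlow : ∀ x y, f x + ⟪adjoint A (A x - PQ (A x)), y - x⟫ ≤ f y := fun x y => by
    rw [hfA, Function.comp_apply, Function.comp_apply, adjoint_inner_left, map_sub]
    exact hP.proximity_add_inner_le hQconv (A x) (A y)
  have hgrad : ∀ x, HasGradientAt f (adjoint A (A x - PQ (A x))) x := fun x =>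
    hfA ▸ (hP.hasGradientAt_proximity hQconv (A x)).comp_continuousLinearMap A
  refine ⟨convexOn_univ_of_add_inner_le hlow, hgrad, fun x => ?_⟩
  rw [(hgrad x).forall_le_iff_eq_zero (hlow x), hV, add_eq_left,
    smul_eq_zero_iff_right (inv_ne_zero (pow_pos hA 2).ne'), ← neg_sub, map_neg, neg_eq_zero]

theorem stmt_16 {H₁ H₂ : Type*} [NormedAddCommGroup H₁] [InnerProductSpace ℝ H₁]
    [CompleteSpace H₁] [NormedAddCommGroup H₂] [InnerProductSpace ℝ H₂] [CompleteSpace H₂]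
    (A : H₁ →L[ℝ] H₂) (hA : ‖A‖ > 0)
    (Q : Set H₂) (hQne : Q.Nonempty) (hQc : IsClosed Q) (hQconv : Convex ℝ Q)
    (PQ : H₂ → H₂)
    (hPQ : ∀ y : H₂, PQ y ∈ Q ∧ ∀ w ∈ Q, ‖PQ y - y‖ ≤ ‖w - y‖)
    (f : H₁ → ℝ)
    (hf : ∀ x : H₁, f x = (1 / 2) * ‖PQ (A x) - A x‖ ^ 2)
    (V : H₁ → H₁)
    (hV : ∀ x : H₁, V x = x + (‖A‖ ^ 2)⁻¹ • (ContinuousLinearMap.adjoint A) (PQ (A x) - A x)) :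
    ConvexOn ℝ Set.univ f ∧
      (∀ x : H₁, HasGradientAt f ((ContinuousLinearMap.adjoint A) (A x - PQ (A x))) x) ∧
      (∀ x : H₁, V x = x ↔ ∀ y : H₁, f x ≤ f y) :=
  stmt_16_general A hA Q hQconv PQ hPQ f hf V hV
end

section
/- Let A : H₁ → H₂ be bounded linear with ‖A‖ > 0, b ∈ H₂, and suppose the linear equation Az = b has a solution. Then the operator V_τ defined by V_τ x := x − (‖Ax − b‖²/‖A*(Ax − b)‖²) A*(Ax − b) when Ax ≠ b and V_τ x := x when Ax = b, satisfies Fix V_τ = {x : Ax = b} and V_τ is 1-strongly quasi-nonexpansive. -/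
open scoped RealInnerProductSpace

theorem stmt_18 {H₁ H₂ : Type*} [NormedAddCommGroup H₁] [InnerProductSpace ℝ H₁]
    [CompleteSpace H₁] [NormedAddCommGroup H₂] [InnerProductSpace ℝ H₂] [CompleteSpace H₂]
    (A : H₁ →L[ℝ] H₂) (hA : ‖A‖ > 0) (b : H₂)
    (hsol : ∃ z : H₁, A z = b)
    (Vτ : H₁ → H₁)
    (hV₁ : ∀ x : H₁, A x ≠ b →
      Vτ x = x - (‖A x - b‖ ^ 2 / ‖(ContinuousLinearMap.adjoint A) (A x - b)‖ ^ 2) •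
        (ContinuousLinearMap.adjoint A) (A x - b))
    (hV₂ : ∀ x : H₁, A x = b → Vτ x = x) :
    (∀ x : H₁, Vτ x = x ↔ A x = b) ∧
      (∀ (x z : H₁), A z = b → ‖Vτ x - z‖ ^ 2 ≤ ‖x - z‖ ^ 2 - ‖Vτ x - x‖ ^ 2) := by
  obtain ⟨z₀, hz₀⟩ := hsol
  -- key inner product identity
  have key : ∀ (x z : H₁), A z = b →
      ⟪x - z, (ContinuousLinearMap.adjoint A) (A x - b)⟫ = ‖A x - b‖ ^ 2 := by
    intro x z hz
    rw [real_inner_comm, ContinuousLinearMap.adjoint_inner_left, map_sub, hz,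
      real_inner_self_eq_norm_sq]
  have hune : ∀ x : H₁, A x ≠ b → (ContinuousLinearMap.adjoint A) (A x - b) ≠ 0 := by
    intro x hx hu
    have h := key x z₀ hz₀
    rw [hu, inner_zero_right] at h
    have : A x - b ≠ 0 := sub_ne_zero.mpr hx
    have := norm_pos_iff.mpr this
    nlinarith
  constructor
  · intro x
    constructor
    · intro hfix
      by_contra hx
      have hb : A x - b ≠ 0 := sub_ne_zero.mpr hx
      have hu := hune x hx
      have hV := hV₁ x hx
      rw [hfix] at hV
      have : (‖A x - b‖ ^ 2 / ‖(ContinuousLinearMap.adjoint A) (A x - b)‖ ^ 2) •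
          (ContinuousLinearMap.adjoint A) (A x - b) = 0 := by
        have := sub_eq_self.mp hV.symm
        exact this
      rcases smul_eq_zero.mp this with h | h
      · have h1 := norm_pos_iff.mpr hb
        have h2 := norm_pos_iff.mpr hu
        have := div_eq_zero_iff.mp h
        rcases this with h | h <;> nlinarith
      · exact hu h
    · exact hV₂ x
  · intro x z hz
    by_cases hx : A x = b
    · rw [hV₂ x hx]
      simp
    · have hu := hune x hx
      set u := (ContinuousLinearMap.adjoint A) (A x - b) with hudef
      set t : ℝ := ‖A x - b‖ ^ 2 / ‖u‖ ^ 2 with htdef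
      have hb : A x - b ≠ 0 := sub_ne_zero.mpr hx
      have hVx : Vτ x = x - t • u := hV₁ x hx
      have hnu : (0:ℝ) < ‖u‖ ^ 2 := pow_pos (norm_pos_iff.mpr hu) 2
      have hkey : ⟪x - z, u⟫ = t * ‖u‖ ^ 2 := by
        rw [key x z hz, htdef]
        field_simp
      have e1 : Vτ x - z = (x - z) - t • u := by rw [hVx]; abel
      have e2 : Vτ x - x = -(t • u) := by rw [hVx]; abel
      rw [e1, e2, norm_neg, norm_smul, mul_pow]
      have expand : ‖(x - z) - t • u‖ ^ 2
          = ‖x - z‖ ^ 2 - 2 * ⟪x - z, t • u⟫ + ‖t • u‖ ^ 2 := by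
        rw [@norm_sub_sq_real]
      rw [expand, real_inner_smul_right, hkey, norm_smul, mul_pow]
      have ht2 : ‖t‖ ^ 2 = t ^ 2 := by rw [Real.norm_eq_abs, sq_abs]
      rw [ht2]
      nlinarith
end

section
/- Let f : H₂ → ℝ be a continuous convex function with S(f,0) := {y : f(y) ≤ 0} ≠ ∅, and let P_f be the subgradient projection P_f(y) = y − (max(f(y),0)/‖g_f(y)‖²) g_f(y) for f(y) > 0 and P_f(y) = y otherwise, where g_f(y) is a subgradient of f at y. Then Fix P_f = S(f, 0) and P_f is a cutter: ⟨y − P_f y, z − P_f y⟩ ≤ 0 for all y ∈ H₂ and z with f(z) ≤ 0. -/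
open scoped RealInnerProductSpace

theorem stmt_19 {H₂ : Type*} [NormedAddCommGroup H₂] [InnerProductSpace ℝ H₂]
    (f : H₂ → ℝ) (hfc : Continuous f) (hfconv : ConvexOn ℝ Set.univ f)
    (hS : ∃ y : H₂, f y ≤ 0)
    (g : H₂ → H₂)
    (hg : ∀ y w : H₂, f y + ⟪g y, w - y⟫ ≤ f w)
    (Pf : H₂ → H₂)
    (hPf₁ : ∀ y : H₂, f y > 0 → Pf y = y - (max (f y) 0 / ‖g y‖ ^ 2) • g y)
    (hPf₂ : ∀ y : H₂, f y ≤ 0 → Pf y = y) :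
    (∀ y : H₂, Pf y = y ↔ f y ≤ 0) ∧
      (∀ (y z : H₂), f z ≤ 0 → ⟪y - Pf y, z - Pf y⟫ ≤ 0) := by
  obtain ⟨z₀, hz₀⟩ := hS
  have hgne : ∀ y : H₂, f y > 0 → g y ≠ 0 := by
    intro y hy h0
    have h := hg y z₀
    rw [h0, inner_zero_left] at h
    linarith
  constructor
  · intro y
    constructor
    · intro h
      by_contra hpos
      push_neg at hpos
      have hgy := hgne y hpos
      have h1 := hPf₁ y hpos
      rw [h] at h1
      have hmax : max (f y) 0 = f y := max_eq_left hpos.le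
      have hc : (max (f y) 0 / ‖g y‖ ^ 2) > 0 := by
        rw [hmax]
        exact div_pos hpos (pow_pos (norm_pos_iff.mpr hgy) 2)
      have : (max (f y) 0 / ‖g y‖ ^ 2) • g y = 0 := by
        have := sub_eq_self.mp h1.symm
        exact this
      rcases smul_eq_zero.mp this with h' | h'
      · exact absurd h' (ne_of_gt hc)
      · exact hgy h'
    · exact hPf₂ y
  · intro y z hz
    by_cases hy : f y ≤ 0
    · rw [hPf₂ y hy]
      simp
    · push_neg at hy
      have hgy := hgne y hy
      rw [hPf₁ y hy]
      have hmax : max (f y) 0 = f y := max_eq_left hy.le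
      set c : ℝ := max (f y) 0 / ‖g y‖ ^ 2 with hcdef
      have hnorm : (0:ℝ) < ‖g y‖ ^ 2 := pow_pos (norm_pos_iff.mpr hgy) 2
      have hc : c = f y / ‖g y‖ ^ 2 := by rw [hcdef, hmax]
      have hcpos : 0 < c := hc ▸ div_pos hy hnorm
      have hcn : c * ‖g y‖ ^ 2 = f y := by
        rw [hc]; field_simp
      have e1 : y - (y - c • g y) = c • g y := by abel
      have e2 : z - (y - c • g y) = (z - y) + c • g y := by abel
      rw [e1, e2, inner_add_right, real_inner_smul_left, real_inner_smul_left,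
        real_inner_smul_right, real_inner_self_eq_norm_sq]
      have hineq := hg y z
      nlinarith [hineq, hcpos, mul_nonpos_of_nonneg_of_nonpos hcpos.le hz]
end
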